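/- arXiv:2508.06179 — 4 statements merged into one kernel-verified Lean document; each statement's English description precedes it below -/
import Mathlib

section
/- Let p ≥ 1, d ≥ 1 be an integer, b ≥ 0 and α > b + d/p, and let c0 > 0. Let (ξ_{l,r}), for l ∈ ℕ and 1 ≤ r ≤ N_l where N_l ≤ c0·2^{ld}, be independent standard p-exponential random variables. Then there exists a constant c2 > 0 (depending only on p, d, α, b, c0) such that E exp( c2 · Σ_{l≥0} Σ_{r=1}^{N_l} 2^{−p l (α−b)} |ξ_{l,r}|^p ) < ∞. -/
open MeasureTheory Real ProbabilityTheory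

/-- The standard univariate `p`-exponential distribution `Exp(p;0,1)`: the probability measure
on `ℝ` with density proportional to `exp(−|x|^p/p)`. -/
noncomputable def stdPExp (p : ℝ) : Measure ℝ :=
  (∫⁻ x : ℝ, ENNReal.ofReal (Real.exp (-(|x| ^ p / p))))⁻¹ •
    MeasureTheory.volume.withDensity fun x => ENNReal.ofReal (Real.exp (-(|x| ^ p / p)))

/-!
The weights `w_{l,r} = 2^{-pl(α-b)}` are summable, because level `l` carries at most
`c₀ 2^{ld}` of them and `p(α-b) > d`; let `T` be their sum. With `θ_i = w_i / (T + 1)` and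
`c₂ = s₀ / (T + 1)` for some `s₀ < 1/p`, the integrand is `∏ fᵢ^{θᵢ}` with
`fᵢ = exp(s₀ |ξᵢ|^p)`. Each `fᵢ` has the same finite mean `K`, since `exp(s₀ |x|^p)` is
integrable against the density `exp(-|x|^p/p)`. As `∑ θᵢ ≤ 1`, Hölder's inequality bounds the
mean of every finite subproduct by `∏ K^{θᵢ} ≤ max K 1`, and monotone convergence passes to the
infinite product.
-/

open Finset
open scoped ENNReal

section PExponentialIntegrals

variable {p b : ℝ}

theorem integral_exp_neg_mul_abs_rpow (hp : 0 < p) (hb : 0 < b) :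
    ∫ x : ℝ, exp (-b * |x| ^ p) = 2 * (b ^ (-1 / p) * Gamma (1 / p + 1)) :=
  (integral_comp_abs (f := fun x => exp (-b * x ^ p))).trans
    (by rw [integral_exp_neg_mul_rpow hp hb])

/-- `integral_comp_abs` holds without integrability (both sides are then `0`), so integrability
follows from the value of the integral being nonzero. -/
theorem integrable_exp_neg_mul_abs_rpow (hp : 0 < p) (hb : 0 < b) :
    Integrable fun x : ℝ => exp (-b * |x| ^ p) :=
  .of_integral_ne_zero (by rw [integral_exp_neg_mul_abs_rpow hp hb]; positivity)

theorem lintegral_exp_neg_mul_abs_rpow (hp : 0 < p) (hb : 0 < b) :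
    ∫⁻ x : ℝ, ENNReal.ofReal (exp (-b * |x| ^ p)) =
      ENNReal.ofReal (2 * (b ^ (-1 / p) * Gamma (1 / p + 1))) := by
  rw [← integral_exp_neg_mul_abs_rpow hp hb, ofReal_integral_eq_lintegral_ofReal
    (integrable_exp_neg_mul_abs_rpow hp hb) (.of_forall fun _ => (exp_pos _).le)]

theorem lintegral_exp_mul_abs_rpow_stdPExp_lt_top {s : ℝ} (hp : 0 < p) (hs : s < 1 / p) :
    ∫⁻ x, ENNReal.ofReal (exp (s * |x| ^ p)) ∂stdPExp p < ⊤ := by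
  have hdensity : ∀ x : ℝ, exp (-(|x| ^ p / p)) = exp (-(1 / p) * |x| ^ p) := fun x => by
    congr 1; ring
  have htilted : ∀ x : ℝ, ENNReal.ofReal (exp (-(|x| ^ p / p))) *
      ENNReal.ofReal (exp (s * |x| ^ p)) = ENNReal.ofReal (exp (-(1 / p - s) * |x| ^ p)) :=
    fun x => by rw [← ENNReal.ofReal_mul (exp_pos _).le, ← exp_add]; congr 2; ring
  rw [stdPExp, lintegral_smul_measure, lintegral_withDensity_eq_lintegral_mul _ (by fun_prop)
    (by fun_prop)]
  simp only [Pi.mul_apply, htilted]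
  simp only [hdensity]
  rw [lintegral_exp_neg_mul_abs_rpow hp (by positivity),
    lintegral_exp_neg_mul_abs_rpow hp (by linarith)]
  refine ENNReal.mul_lt_top (ENNReal.inv_lt_top.mpr (ENNReal.ofReal_pos.mpr ?_))
    ENNReal.ofReal_lt_top
  positivity

end PExponentialIntegrals

section Holder

variable {α ι : Type*} [MeasurableSpace α] {μ : Measure α}

theorem ENNReal.rpow_sum_of_nonneg (x : ℝ≥0∞) {s : Finset ι} {θ : ι → ℝ}
    (hθ : ∀ i ∈ s, 0 ≤ θ i) : x ^ ∑ i ∈ s, θ i = ∏ i ∈ s, x ^ θ i := by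
  induction s using Finset.cons_induction with
  | empty => simp
  | cons i s hi ih =>
    rw [sum_cons, prod_cons, ENNReal.rpow_add_of_nonneg _ _ (hθ i (mem_cons_self i s))
      (sum_nonneg fun j hj => hθ j (mem_cons_of_mem hj)),
      ih fun j hj => hθ j (mem_cons_of_mem hj)]

theorem ENNReal.tprod_eq_iSup_prod {f : ι → ℝ≥0∞} (hf : ∀ i, 1 ≤ f i) :
    ∏' i, f i = ⨆ s : Finset ι, ∏ i ∈ s, f i :=
  HasProd.tprod_eq (tendsto_atTop_iSup (prod_mono_set_of_one_le' hf))

theorem lintegral_tprod_eq_iSup_lintegral_prod [Countable ι] {f : ι → α → ℝ≥0∞}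
    (hf : ∀ i, AEMeasurable (f i) μ) (hf1 : ∀ i a, 1 ≤ f i a) :
    ∫⁻ a, ∏' i, f i a ∂μ = ⨆ s : Finset ι, ∫⁻ a, ∏ i ∈ s, f i a ∂μ := by
  classical
  rw [lintegral_congr fun a => ENNReal.tprod_eq_iSup_prod (hf1 · a)]
  exact lintegral_iSup_directed (fun s => s.aemeasurable_fun_prod fun i _ => hf i)
    fun s t => ⟨s ∪ t, fun a => prod_mono_set_of_one_le' (hf1 · a) subset_union_left,
      fun a => prod_mono_set_of_one_le' (hf1 · a) subset_union_right⟩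

theorem lintegral_prod_rpow_le_of_sum_le_one [IsProbabilityMeasure μ] (s : Finset ι)
    {f : ι → α → ℝ≥0∞} (hf : ∀ i ∈ s, AEMeasurable (f i) μ) {θ : ι → ℝ}
    (hθ : ∀ i ∈ s, 0 ≤ θ i) (hθ1 : ∑ i ∈ s, θ i ≤ 1) :
    ∫⁻ a, ∏ i ∈ s, f i a ^ θ i ∂μ ≤ ∏ i ∈ s, (∫⁻ a, f i a ∂μ) ^ θ i := by
  simpa using ENNReal.lintegral_mul_prod_norm_pow_le s (g := 1) aemeasurable_const hf
    (1 - ∑ i ∈ s, θ i) (sub_add_cancel _ _) (sub_nonneg.mpr hθ1) hθ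

theorem lintegral_tprod_rpow_le [IsProbabilityMeasure μ] [Countable ι] {f : ι → α → ℝ≥0∞}
    (hf : ∀ i, AEMeasurable (f i) μ) (hf1 : ∀ i a, 1 ≤ f i a) {θ : ι → ℝ} (hθ : ∀ i, 0 ≤ θ i)
    (hθsum : Summable θ) (hθ1 : ∑' i, θ i ≤ 1) {K : ℝ≥0∞} (hK1 : 1 ≤ K)
    (hK : ∀ i, ∫⁻ a, f i a ∂μ ≤ K) :
    ∫⁻ a, ∏' i, f i a ^ θ i ∂μ ≤ K := by
  rw [lintegral_tprod_eq_iSup_lintegral_prod (fun i => (hf i).pow_const _)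
    fun i a => by simpa using ENNReal.rpow_le_rpow (hf1 i a) (hθ i)]
  refine iSup_le fun s => ?_
  have hs : ∑ i ∈ s, θ i ≤ 1 := (hθsum.sum_le_tsum s fun i _ => hθ i).trans hθ1
  calc ∫⁻ a, ∏ i ∈ s, f i a ^ θ i ∂μ
      ≤ ∏ i ∈ s, (∫⁻ a, f i a ∂μ) ^ θ i :=
        lintegral_prod_rpow_le_of_sum_le_one s (fun i _ => hf i) (fun i _ => hθ i) hs
    _ ≤ ∏ i ∈ s, K ^ θ i := prod_le_prod' fun i _ => ENNReal.rpow_le_rpow (hK i) (hθ i)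
    _ = K ^ ∑ i ∈ s, θ i := (ENNReal.rpow_sum_of_nonneg K fun i _ => hθ i).symm
    _ ≤ K ^ (1 : ℝ) := ENNReal.rpow_le_rpow_of_exponent_le hK1 hs
    _ = K := ENNReal.rpow_one K

end Holder

theorem summable_sigma_pow_of_card_le {N : ℕ → ℕ} {C A q : ℝ}
    (hN : ∀ l, (N l : ℝ) ≤ C * A ^ l) (hA : 0 ≤ A) (hq : 0 ≤ q) (hAq : A * q < 1) :
    Summable fun i : Σ l, Fin (N l) => q ^ i.1 := by
  refine (summable_sigma_of_nonneg fun i => pow_nonneg hq _).mpr ⟨fun _ => .of_finite, ?_⟩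
  simp only [tsum_fintype, sum_const, card_univ, Fintype.card_fin, nsmul_eq_mul]
  refine .of_nonneg_of_le (fun l => by positivity) (fun l => ?_)
    ((summable_geometric_of_lt_one (mul_nonneg hA hq) hAq).mul_left C)
  calc (N l : ℝ) * q ^ l ≤ C * A ^ l * q ^ l := by gcongr; exact hN l
    _ = C * (A * q) ^ l := by rw [mul_pow, mul_assoc]

theorem summable_two_rpow_neg_mul_of_card_le {N : ℕ → ℕ} {c0 γ : ℝ} {d : ℕ}
    (hN : ∀ l, (N l : ℝ) ≤ c0 * 2 ^ (l * d)) (hγ : (d : ℝ) < γ) :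
    Summable fun i : Σ l, Fin (N l) => (2 : ℝ) ^ (-(γ * i.1)) := by
  have hpow (l : ℕ) : (2 : ℝ) ^ (-(γ * l)) = ((2 : ℝ) ^ (-γ)) ^ l := by
    rw [← rpow_natCast, ← rpow_mul zero_le_two]; ring_nf
  simp only [hpow]
  refine summable_sigma_pow_of_card_le (A := 2 ^ d) (fun l => pow_mul' (2 : ℝ) l d ▸ hN l)
    (by positivity) (by positivity) ?_
  rw [← rpow_natCast, ← rpow_add zero_lt_two]
  exact rpow_lt_one_of_one_lt_of_neg one_lt_two (by linarith)

theorem exp_moment_besov_prior_general {Ω : Type*} [MeasureSpace Ω]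
    [IsProbabilityMeasure (ℙ : Measure Ω)]
    (p : ℝ) (hp : 1 ≤ p) (d : ℕ) (b α c0 : ℝ)
    (hα : b + d / p < α) (N : ℕ → ℕ)
    (hN : ∀ l, (N l : ℝ) ≤ c0 * 2 ^ (l * d))
    (ξ : (Σ l : ℕ, Fin (N l)) → Ω → ℝ) (hmeas : ∀ i, Measurable (ξ i))
    (hdist : ∀ i, Measure.map (ξ i) ℙ = stdPExp p) :
    ∃ c2 > (0 : ℝ), ∫⁻ ω, ∏' i : Σ l : ℕ, Fin (N l),
        ENNReal.ofReal
          (Real.exp (c2 * ((2 : ℝ) ^ (-(p * (i.1 : ℝ) * (α - b))) * |ξ i ω| ^ p))) ∂ℙ < ⊤ := by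
  have hp0 : 0 < p := by linarith
  have hw : Summable fun i : Σ l : ℕ, Fin (N l) => (2 : ℝ) ^ (-(p * (i.1 : ℝ) * (α - b))) := by
    refine (summable_two_rpow_neg_mul_of_card_le hN (γ := p * (α - b)) ?_).congr
      fun i => by ring_nf
    have := (div_lt_iff₀ hp0).mp (lt_sub_iff_add_lt'.mpr hα)
    linarith
  set T := ∑' i : Σ l : ℕ, Fin (N l), (2 : ℝ) ^ (-(p * (i.1 : ℝ) * (α - b)))
  have hT : 0 ≤ T := tsum_nonneg fun _ => by positivity
  set s0 : ℝ := 1 / (2 * p)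
  set K := ∫⁻ x, ENNReal.ofReal (exp (s0 * |x| ^ p)) ∂stdPExp p
  have hK : K < ⊤ := lintegral_exp_mul_abs_rpow_stdPExp_lt_top hp0
    (by rw [one_div_lt_one_div (by positivity) hp0]; linarith)
  refine ⟨s0 / (T + 1), by positivity, ?_⟩
  have hfactor (i : Σ l : ℕ, Fin (N l)) (ω : Ω) :
      ENNReal.ofReal (exp (s0 / (T + 1) * ((2 : ℝ) ^ (-(p * (i.1 : ℝ) * (α - b))) * |ξ i ω| ^ p))) =
        ENNReal.ofReal (exp (s0 * |ξ i ω| ^ p)) ^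
          ((2 : ℝ) ^ (-(p * (i.1 : ℝ) * (α - b))) / (T + 1)) := by
    rw [ENNReal.ofReal_rpow_of_nonneg (exp_pos _).le (by positivity), ← exp_mul]
    ring_nf
  simp only [hfactor]
  refine (lintegral_tprod_rpow_le (fun i => by fun_prop) (fun i ω => ?_) (fun i => by positivity)
    (hw.div_const _) ?_ (le_max_right K 1) fun i => ?_).trans_lt (max_lt hK ENNReal.one_lt_top)
  · exact ENNReal.one_le_ofReal.mpr (one_le_exp (by positivity))
  · rw [tsum_div_const, div_le_one (by positivity)]; linarith
  · refine le_max_of_le_left (le_of_eq ?_)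
    rw [← lintegral_map (f := fun x => ENNReal.ofReal (exp (s0 * |x| ^ p))) (by fun_prop)
      (hmeas i), hdist i]

/-- For `p ≥ 1`, `b ≥ 0`, `α > b + d/p` and independent standard `p`-exponential variables
`ξ_{l,r}` (`1 ≤ r ≤ N_l`, `N_l ≤ c₀ 2^{ld}`), there is `c₂ > 0` with
`E exp(c₂ Σ_{l,r} 2^{−pl(α−b)} |ξ_{l,r}|^p) < ∞`
(the exponential of the sum written as the product of the exponentials). -/
theorem exp_moment_besov_prior {Ω : Type*} [MeasureSpace Ω]
    [IsProbabilityMeasure (ℙ : Measure Ω)]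
    (p : ℝ) (hp : 1 ≤ p) (d : ℕ) (hd : 1 ≤ d) (b α c0 : ℝ) (hb : 0 ≤ b)
    (hα : b + d / p < α) (hc0 : 0 < c0) (N : ℕ → ℕ)
    (hN : ∀ l, (N l : ℝ) ≤ c0 * 2 ^ (l * d))
    (ξ : (Σ l : ℕ, Fin (N l)) → Ω → ℝ) (hmeas : ∀ i, Measurable (ξ i))
    (hdist : ∀ i, Measure.map (ξ i) ℙ = stdPExp p)
    (hindep : iIndepFun ξ ℙ) :
    ∃ c2 > (0 : ℝ), ∫⁻ ω, ∏' i : Σ l : ℕ, Fin (N l),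
        ENNReal.ofReal
          (Real.exp (c2 * ((2 : ℝ) ^ (-(p * (i.1 : ℝ) * (α - b))) * |ξ i ω| ^ p))) ∂ℙ < ⊤ :=
  exp_moment_besov_prior_general p hp d b α c0 hα N hN ξ hmeas hdist
end

section
/- Let p ≥ 1 and define V(x) = |x|^p/p for x ∈ ℝ. Then for all real x and y, exp( V(x) + V(y) − V(x−y) ) + exp( V(x) + V(y) − V(x+y) ) ≥ 1. -/
/-!
If `x` and `y` have the same sign then `|x - y| ≤ max |x| |y|`, otherwise `|x + y| ≤ max |x| |y|`.
Since `t ↦ t ^ p` is monotone on `[0, ∞)` and `max a b ^ p ≤ a ^ p + b ^ p`, one of the two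
exponents is nonnegative, so its exponential alone is already at least `1`.
-/

open Real

theorem abs_sub_le_max_abs_of_mul_nonneg {x y : ℝ} (h : 0 ≤ x * y) : |x - y| ≤ max |x| |y| := by
  rw [abs_le]
  rcases mul_nonneg_iff.1 h with ⟨hx, hy⟩ | ⟨hx, hy⟩
  · rw [abs_of_nonneg hx, abs_of_nonneg hy]
    constructor <;> linarith [le_max_left x y, le_max_right x y]
  · rw [abs_of_nonpos hx, abs_of_nonpos hy]
    constructor <;> linarith [le_max_left (-x) (-y), le_max_right (-x) (-y)]

theorem abs_add_le_max_abs_of_mul_nonpos {x y : ℝ} (h : x * y ≤ 0) : |x + y| ≤ max |x| |y| := by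
  simpa using abs_sub_le_max_abs_of_mul_nonneg (x := x) (y := -y) (by linarith [mul_neg x y])

theorem rpow_le_rpow_add_rpow_of_le_max {a b c p : ℝ} (ha : 0 ≤ a) (hb : 0 ≤ b) (hc : 0 ≤ c)
    (hp : 0 ≤ p) (h : c ≤ max a b) : c ^ p ≤ a ^ p + b ^ p :=
  calc c ^ p ≤ max a b ^ p := rpow_le_rpow hc h hp
    _ = max (a ^ p) (b ^ p) := (monotoneOn_rpow_Ici_of_exponent_nonneg hp).map_max ha hb
    _ ≤ a ^ p + b ^ p := max_le_add_of_nonneg (rpow_nonneg ha p) (rpow_nonneg hb p)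

theorem one_le_exp_add_exp_of_nonneg_or {a b : ℝ} (h : 0 ≤ a ∨ 0 ≤ b) : 1 ≤ exp a + exp b := by
  rcases h with ha | hb
  · linarith [one_le_exp ha, exp_pos b]
  · linarith [one_le_exp hb, exp_pos a]

/-- For `p ≥ 1` and `V(x) = |x|^p/p`, one has
`exp(V(x)+V(y)−V(x−y)) + exp(V(x)+V(y)−V(x+y)) ≥ 1` for all real `x, y`. -/
theorem pExp_potential_inequality (p : ℝ) (hp : 1 ≤ p) (x y : ℝ) :
    1 ≤ Real.exp (|x| ^ p / p + |y| ^ p / p - |x - y| ^ p / p) +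
        Real.exp (|x| ^ p / p + |y| ^ p / p - |x + y| ^ p / p) := by
  have exponent_nonneg (z : ℝ) (hz : |z| ≤ max |x| |y|) :
      0 ≤ |x| ^ p / p + |y| ^ p / p - |z| ^ p / p := by
    rw [← add_div, sub_nonneg]
    refine div_le_div_of_nonneg_right ?_ (by linarith)
    exact rpow_le_rpow_add_rpow_of_le_max (abs_nonneg x) (abs_nonneg y) (abs_nonneg z)
      (by linarith) hz
  apply one_le_exp_add_exp_of_nonneg_or
  rcases le_total 0 (x * y) with hxy | hxy
  · exact Or.inl (exponent_nonneg _ (abs_sub_le_max_abs_of_mul_nonneg hxy))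
  · exact Or.inr (exponent_nonneg _ (abs_add_le_max_abs_of_mul_nonpos hxy))
end

section
/- Let (X, 𝒜, λ) be a probability space, k ∈ ℕ, U > 0, and let g₁, g₂ : X → ℝ^k be measurable functions with sup_{x∈X} |g₁(x)| ≤ U and sup_{x∈X} |g₂(x)| ≤ U. For g ∈ {g₁, g₂}, let P_g be the probability measure on ℝ^k × X with density p_g(y,x) = (2π)^{−k/2} exp(−|y − g(x)|²/2) with respect to dy × dλ, where dy is Lebesgue measure on ℝ^k. Then D₂(P_{g₁} ‖ P_{g₂}) ≤ e^{4U²} ∫_X |g₁(x) − g₂(x)|² dλ(x). -/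
open MeasureTheory Real

/-- The law `P_g` of one observation `(Y, X)` in the regression model `Y = g(X) + ε`,
`ε ∼ N(0, I_k)`, `X ∼ λ`: the measure on `ℝ^k × X` with density
`p_g(y,x) = (2π)^{−k/2} exp(−|y − g(x)|²/2)` with respect to `dy × dλ`. -/
noncomputable def regressionLaw {X : Type*} [MeasurableSpace X] (lam : Measure X) (k : ℕ)
    (g : X → EuclideanSpace ℝ (Fin k)) : Measure (EuclideanSpace ℝ (Fin k) × X) :=
  (MeasureTheory.volume.prod lam).withDensity fun z =>
    ENNReal.ofReal ((2 * Real.pi) ^ (-(k : ℝ) / 2) * Real.exp (-‖z.1 - g z.2‖ ^ 2 / 2))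

/-- The 2-Rényi divergence `D₂(P‖Q) = log ∫ (dP/dQ) dP`. -/
noncomputable def renyi2Divergence {α : Type*} [MeasurableSpace α] (P Q : Measure α) : ℝ :=
  Real.log (∫ x, (P.rnDeriv Q x).toReal ∂P)

/-!
Both laws have strictly positive densities with respect to `dy × dλ`, so
`D₂(P₁‖P₂) = log ∫ p₁² / p₂`. Completing the square in `y` gives
`p₁² / p₂ (y, x) = exp ‖g₁ x - g₂ x‖² · φ(y - (2 g₁ x - g₂ x))` with `φ` the standard Gaussian
density, so integrating out `y` leaves `log ∫ exp ‖g₁ - g₂‖² dλ`. Finally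
`log t ≤ t - 1` and `eᵗ - 1 ≤ t eᵗ ≤ e^{4U²} t` for `0 ≤ t = ‖g₁ - g₂‖² ≤ 4U²`.
-/

section GaussianDensity

variable {V : Type*} [NormedAddCommGroup V] [InnerProductSpace ℝ V]

theorem norm_sub_sq_completing_square (y a b : V) :
    -‖y - a‖ ^ 2 + ‖y - b‖ ^ 2 / 2 = ‖a - b‖ ^ 2 - ‖y - ((2 : ℝ) • a - b)‖ ^ 2 / 2 := by
  simp only [← real_inner_self_eq_norm_sq, inner_sub_left, inner_sub_right,
    real_inner_smul_left, real_inner_smul_right, real_inner_comm a y, real_inner_comm b y,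
    real_inner_comm b a]
  ring

theorem gaussian_sq_div_gaussian (c : ℝ) (y a b : V) :
    (c * exp (-‖y - a‖ ^ 2 / 2)) ^ 2 / (c * exp (-‖y - b‖ ^ 2 / 2)) =
      exp (‖a - b‖ ^ 2) * (c * exp (-‖y - ((2 : ℝ) • a - b)‖ ^ 2 / 2)) := by
  rcases eq_or_ne c 0 with rfl | hc
  · simp
  have hexp : exp (-‖y - a‖ ^ 2 / 2) ^ 2 =
      exp (‖a - b‖ ^ 2) * exp (-‖y - ((2 : ℝ) • a - b)‖ ^ 2 / 2) * exp (-‖y - b‖ ^ 2 / 2) := by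
    rw [← exp_nat_mul, ← exp_add, ← exp_add]
    congr 1
    linarith [norm_sub_sq_completing_square y a b]
  rw [mul_pow, hexp]
  field_simp

variable [FiniteDimensional ℝ V] [MeasurableSpace V] [BorelSpace V]

theorem integral_gaussian_density (m : V) :
    ∫ y, (2 * π) ^ (-(Module.finrank ℝ V : ℝ) / 2) * exp (-‖y - m‖ ^ 2 / 2) = 1 := by
  have hexp : ∀ y : V, -‖y‖ ^ 2 / 2 = -(1 / 2) * ‖y‖ ^ 2 := fun y => by ring
  rw [integral_const_mul, integral_sub_right_eq_self (fun y => exp (-‖y‖ ^ 2 / 2)) m]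
  simp_rw [hexp]
  rw [GaussianFourier.integral_rexp_neg_mul_sq_norm (by norm_num), show π / (1 / 2) = 2 * π by ring,
    ← rpow_add (by positivity), neg_div, neg_add_cancel, rpow_zero]

theorem integrable_gaussian_density (m : V) :
    Integrable fun y => (2 * π) ^ (-(Module.finrank ℝ V : ℝ) / 2) * exp (-‖y - m‖ ^ 2 / 2) :=
  Integrable.of_integral_ne_zero (by simp [integral_gaussian_density])

theorem integral_prod_mul_gaussian_density {X : Type*} [MeasurableSpace X] (lam : Measure X)
    [SFinite lam] {h : X → ℝ} {m : X → V} (hh : AEStronglyMeasurable h lam) (hm : Measurable m) :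
    ∫ z : V × X, h z.2 * ((2 * π) ^ (-(Module.finrank ℝ V : ℝ) / 2) *
      exp (-‖z.1 - m z.2‖ ^ 2 / 2)) ∂(volume.prod lam) = ∫ x, h x ∂lam := by
  set c : ℝ := (2 * π) ^ (-(Module.finrank ℝ V : ℝ) / 2)
  have hsection : ∀ (a : ℝ) x, ∫ y, a * (c * exp (-‖y - m x‖ ^ 2 / 2)) = a := fun a x => by
    rw [integral_const_mul, integral_gaussian_density, mul_one]
  have hmeas : AEStronglyMeasurable
      (fun z : V × X => h z.2 * (c * exp (-‖z.1 - m z.2‖ ^ 2 / 2))) (volume.prod lam) :=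
    hh.comp_snd.mul (by fun_prop : Measurable fun z : V × X =>
      c * exp (-‖z.1 - m z.2‖ ^ 2 / 2)).aestronglyMeasurable
  have hint_iff : Integrable (fun z : V × X => h z.2 * (c * exp (-‖z.1 - m z.2‖ ^ 2 / 2)))
      (volume.prod lam) ↔ Integrable h lam := by
    have hnorm : ∀ x, ∫ y, ‖h x * (c * exp (-‖y - m x‖ ^ 2 / 2))‖ = ‖h x‖ := fun x => by
      have hG : ∀ y : V, ‖c * exp (-‖y - m x‖ ^ 2 / 2)‖ = c * exp (-‖y - m x‖ ^ 2 / 2) :=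
        fun y => norm_of_nonneg (by positivity)
      simp only [norm_mul, hG]
      exact hsection _ x
    simp only [integrable_prod_iff' hmeas, hnorm, integrable_norm_iff hh]
    exact and_iff_right (ae_of_all _ fun x => (integrable_gaussian_density (m x)).const_mul (h x))
  by_cases hint : Integrable h lam
  · rw [integral_prod_symm _ (hint_iff.2 hint)]
    exact integral_congr_ae (ae_of_all _ fun x => hsection (h x) x)
  · rw [integral_undef hint, integral_undef (hint_iff.not.2 hint)]

end GaussianDensity

theorem renyi2Divergence_withDensity {α : Type*} [MeasurableSpace α] (μ : Measure α)
    [SigmaFinite μ] {p q : α → ℝ} (hp : Measurable p) (hq : Measurable q) (hp0 : ∀ x, 0 ≤ p x)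
    (hq0 : ∀ x, 0 < q x) :
    renyi2Divergence (μ.withDensity fun x => ENNReal.ofReal (p x))
      (μ.withDensity fun x => ENNReal.ofReal (q x)) = log (∫ x, p x ^ 2 / q x ∂μ) := by
  set P := μ.withDensity fun x => ENNReal.ofReal (p x)
  have hrn : ∀ᵐ x ∂μ, (P.rnDeriv (μ.withDensity fun x => ENNReal.ofReal (q x)) x).toReal
      = p x / q x := by
    filter_upwards [Measure.rnDeriv_withDensity_right P μ hq.ennreal_ofReal.aemeasurable
      (ae_of_all _ fun x => (ENNReal.ofReal_pos.2 (hq0 x)).ne')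
      (ae_of_all _ fun x => ENNReal.ofReal_ne_top),
      Measure.rnDeriv_withDensity μ hp.ennreal_ofReal] with x hx hx'
    rw [hx, hx', ENNReal.toReal_mul, ENNReal.toReal_inv, ENNReal.toReal_ofReal (hp0 x),
      ENNReal.toReal_ofReal (hq0 x).le, inv_mul_eq_div]
  rw [renyi2Divergence, integral_congr_ae ((withDensity_absolutelyContinuous _ _).ae_le hrn),
    integral_withDensity_eq_integral_toReal_smul hp.ennreal_ofReal
      (ae_of_all _ fun _ => ENNReal.ofReal_lt_top)]
  congr 1
  refine integral_congr_ae (ae_of_all _ fun x => ?_)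
  simp only [ENNReal.toReal_ofReal (hp0 x), smul_eq_mul]
  ring

theorem exp_sub_one_le_mul_exp (x : ℝ) : exp x - 1 ≤ x * exp x := by
  have h := mul_le_mul_of_nonneg_right (add_one_le_exp (-x)) (exp_pos x).le
  rw [← exp_add, neg_add_cancel, exp_zero] at h
  linarith

theorem log_integral_exp_le {X : Type*} [MeasurableSpace X] (lam : Measure X)
    [IsProbabilityMeasure lam] {f : X → ℝ} {B : ℝ} (hf : AEStronglyMeasurable f lam)
    (hf0 : ∀ x, 0 ≤ f x) (hfB : ∀ x, f x ≤ B) :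
    log (∫ x, exp (f x) ∂lam) ≤ exp B * ∫ x, f x ∂lam := by
  have hf_int : Integrable f lam :=
    .of_bound hf B (ae_of_all _ fun x => by rw [norm_of_nonneg (hf0 x)]; exact hfB x)
  have hexp_int : Integrable (fun x => exp (f x)) lam :=
    .of_bound (continuous_exp.comp_aestronglyMeasurable hf) (exp B)
      (ae_of_all _ fun x => by rw [norm_of_nonneg (exp_pos _).le]; exact exp_le_exp.2 (hfB x))
  have hpos : 0 < ∫ x, exp (f x) ∂lam := integral_exp_pos hexp_int
  calc log (∫ x, exp (f x) ∂lam) ≤ ∫ x, exp (f x) ∂lam - 1 := log_le_sub_one_of_pos hpos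
    _ = ∫ x, (exp (f x) - 1) ∂lam := by
      rw [integral_sub hexp_int (integrable_const 1)]; simp
    _ ≤ ∫ x, exp B * f x ∂lam := by
      refine integral_mono (hexp_int.sub (integrable_const 1)) (hf_int.const_mul _) fun x => ?_
      calc exp (f x) - 1 ≤ f x * exp (f x) := exp_sub_one_le_mul_exp _
        _ ≤ f x * exp B := mul_le_mul_of_nonneg_left (exp_le_exp.2 (hfB x)) (hf0 x)
        _ = exp B * f x := mul_comm _ _
    _ = exp B * ∫ x, f x ∂lam := integral_const_mul _ _

theorem renyi2Div_regressionLaw_le_general {X : Type*} [MeasurableSpace X]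
    (lam : Measure X) [IsProbabilityMeasure lam] (k : ℕ) (U : ℝ)
    (g₁ g₂ : X → EuclideanSpace ℝ (Fin k)) (hm1 : Measurable g₁) (hm2 : Measurable g₂)
    (hb1 : ∀ x, ‖g₁ x‖ ≤ U) (hb2 : ∀ x, ‖g₂ x‖ ≤ U) :
    renyi2Divergence (regressionLaw lam k g₁) (regressionLaw lam k g₂) ≤
      Real.exp (4 * U ^ 2) * ∫ x, ‖g₁ x - g₂ x‖ ^ 2 ∂lam := by
  have hfubini := integral_prod_mul_gaussian_density lam (h := fun x => exp (‖g₁ x - g₂ x‖ ^ 2))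
    (m := fun x => (2 : ℝ) • g₁ x - g₂ x) (by fun_prop) (by fun_prop)
  rw [finrank_euclideanSpace_fin] at hfubini
  have hdist : ∀ x, ‖g₁ x - g₂ x‖ ^ 2 ≤ 4 * U ^ 2 := fun x => by
    have := (norm_sub_le (g₁ x) (g₂ x)).trans (add_le_add (hb1 x) (hb2 x))
    nlinarith [norm_nonneg (g₁ x - g₂ x)]
  rw [regressionLaw, regressionLaw, renyi2Divergence_withDensity _ (by fun_prop) (by fun_prop)
    (fun _ => by positivity) (fun _ => by positivity)]
  simp_rw [gaussian_sq_div_gaussian]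
  rw [hfubini]
  exact log_integral_exp_le lam (by fun_prop) (fun x => sq_nonneg _) hdist

/-- If `sup_x |g₁(x)| ≤ U` and `sup_x |g₂(x)| ≤ U`, then
`D₂(P_{g₁} ‖ P_{g₂}) ≤ e^{4U²} ∫ |g₁ − g₂|² dλ`. -/
theorem renyi2Div_regressionLaw_le {X : Type*} [MeasurableSpace X]
    (lam : Measure X) [IsProbabilityMeasure lam] (k : ℕ) (U : ℝ) (hU : 0 < U)
    (g₁ g₂ : X → EuclideanSpace ℝ (Fin k)) (hm1 : Measurable g₁) (hm2 : Measurable g₂)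
    (hb1 : ∀ x, ‖g₁ x‖ ≤ U) (hb2 : ∀ x, ‖g₂ x‖ ≤ U) :
    renyi2Divergence (regressionLaw lam k g₁) (regressionLaw lam k g₂) ≤
      Real.exp (4 * U ^ 2) * ∫ x, ‖g₁ x - g₂ x‖ ^ 2 ∂lam :=
  renyi2Div_regressionLaw_le_general lam k U g₁ g₂ hm1 hm2 hb1 hb2
end

section
/- Let p ∈ [1,2]. Then for all real x and a, |x+a|^p + |x−a|^p − 2|x|^p ≤ 2|a|^p. -/
/-!
Write `|y| ^ p = (y ^ 2) ^ (p / 2)` with `p / 2 ∈ [0, 1]`. By concavity of `t ↦ t ^ (p / 2)`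
at the midpoint of `(x + a) ^ 2` and `(x - a) ^ 2`, which is `x ^ 2 + a ^ 2`, and then its
subadditivity, `|x + a| ^ p + |x - a| ^ p ≤ 2 (x ^ 2 + a ^ 2) ^ (p / 2) ≤ 2 (|x| ^ p + |a| ^ p)`.
-/

open Real

namespace Real

lemma rpow_add_rpow_le_two_mul_rpow_add_div_two {s u v : ℝ} (hs₀ : 0 ≤ s) (hs₁ : s ≤ 1)
    (hu : 0 ≤ u) (hv : 0 ≤ v) : u ^ s + v ^ s ≤ 2 * ((u + v) / 2) ^ s := by
  have h := (concaveOn_rpow hs₀ hs₁).2 (Set.mem_Ici.2 hu) (Set.mem_Ici.2 hv)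
    (by norm_num : (0 : ℝ) ≤ 1 / 2) (by norm_num : (0 : ℝ) ≤ 1 / 2) (by norm_num)
  simp only [smul_eq_mul] at h
  rw [show 1 / 2 * u + 1 / 2 * v = (u + v) / 2 by ring] at h
  linarith

lemma abs_rpow_eq_sq_rpow_half (y p : ℝ) : |y| ^ p = (y ^ 2) ^ (p / 2) := by
  rw [← sq_abs, ← rpow_natCast, ← rpow_mul (abs_nonneg y)]
  ring_nf

lemma abs_add_rpow_add_abs_sub_rpow_le {p : ℝ} (hp₀ : 0 ≤ p) (hp₂ : p ≤ 2) (x a : ℝ) :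
    |x + a| ^ p + |x - a| ^ p ≤ 2 * (|x| ^ p + |a| ^ p) := by
  simp only [abs_rpow_eq_sq_rpow_half _ p]
  calc ((x + a) ^ 2) ^ (p / 2) + ((x - a) ^ 2) ^ (p / 2)
      ≤ 2 * (((x + a) ^ 2 + (x - a) ^ 2) / 2) ^ (p / 2) :=
        rpow_add_rpow_le_two_mul_rpow_add_div_two (by linarith) (by linarith)
          (sq_nonneg _) (sq_nonneg _)
    _ = 2 * (x ^ 2 + a ^ 2) ^ (p / 2) := by ring_nf
    _ ≤ 2 * ((x ^ 2) ^ (p / 2) + (a ^ 2) ^ (p / 2)) := by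
        gcongr
        exact rpow_add_le_add_rpow (sq_nonneg _) (sq_nonneg _) (by linarith) (by linarith)

end Real

/-- For `p ∈ [1,2]` and all real `x, a`: `|x+a|^p + |x−a|^p − 2|x|^p ≤ 2|a|^p`. -/
theorem abs_rpow_add_sub_le (p : ℝ) (hp1 : 1 ≤ p) (hp2 : p ≤ 2) (x a : ℝ) :
    |x + a| ^ p + |x - a| ^ p - 2 * |x| ^ p ≤ 2 * |a| ^ p := by
  linarith [abs_add_rpow_add_abs_sub_rpow_le (by linarith) hp2 x a]
end
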